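/- Let M ⊆ F[x]^q be a submodule of rank q and degree δ, and let G = {g_1, ..., g_q} ⊆ M. Then G is a minimal Gröbner basis of M if and only if (1) the sum of the degrees of g_1, ..., g_q equals δ, and (2) the leading positions of g_1, ..., g_q are pairwise distinct. -/

import Mathlib

open Polynomial

open scoped Classical

/-- Support of a polynomial vector: monomials `(degree, position)` ordered lexicographically,
which is the term-over-position (top) ordering. -/
noncomputable def vsupp {R : Type*} [CommRing R] {q : ℕ} (f : Fin q → R[X]) :
    Finset (Lex (ℕ × Fin q)) :=
  Finset.univ.biUnion fun i => (f i).support.image fun α => toLex (α, i)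

/-- Leading monomial w.r.t. the top ordering (`⊥` for the zero vector). -/
noncomputable def vlm {R : Type*} [CommRing R] {q : ℕ} (f : Fin q → R[X]) :
    WithBot (Lex (ℕ × Fin q)) := (vsupp f).max

/-- Degree of the leading monomial (junk value `0` for the zero vector). -/
noncomputable def vdeg {R : Type*} [CommRing R] {q : ℕ} (f : Fin q → R[X]) : ℕ :=
  WithBot.unbotD 0 ((vlm f).map fun m => (ofLex m).1)

/-- Leading position. -/
noncomputable def vlpos {R : Type*} [CommRing R] {q : ℕ} (f : Fin q → R[X]) : WithBot (Fin q) :=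
  (vlm f).map fun m => (ofLex m).2

/-- Leading coefficient. -/
noncomputable def vlc {R : Type*} [CommRing R] {q : ℕ} (f : Fin q → R[X]) : R :=
  WithBot.unbotD 0 ((vlm f).map fun m => (f (ofLex m).2).coeff (ofLex m).1)

/-- Leading term of a polynomial vector, as a polynomial vector. -/
noncomputable def vlt {R : Type*} [CommRing R] {q : ℕ} (f : Fin q → R[X]) : Fin q → R[X] :=
  WithBot.unbotD 0 ((vlm f).map fun m => fun j : Fin q =>
    if j = (ofLex m).2 then C ((f (ofLex m).2).coeff (ofLex m).1) * X ^ (ofLex m).1 else 0)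

/-- The leading term submodule `L(F)`. -/
noncomputable def ltSubmodule {R : Type*} [CommRing R] {q : ℕ} (S : Set (Fin q → R[X])) :
    Submodule R[X] (Fin q → R[X]) :=
  Submodule.span R[X] (vlt '' S)

/-- `G` is a Gröbner basis of `M`: `G ⊆ M` and `L(G) = L(M)`. -/
def IsGroebner {R : Type*} [CommRing R] {q : ℕ} (M : Submodule R[X] (Fin q → R[X]))
    (G : Finset (Fin q → R[X])) : Prop :=
  (G : Set (Fin q → R[X])) ⊆ M ∧
    ltSubmodule (G : Set (Fin q → R[X])) = ltSubmodule (M : Set (Fin q → R[X]))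

/-- One-step reduction of `f` to `h` modulo the finite set `Fs` (Adams–Loustaunau Def. 4.1.1). -/
def ReducesOneStep {R : Type*} [CommRing R] {q : ℕ} (Fs : Finset (Fin q → R[X]))
    (f h : Fin q → R[X]) : Prop :=
  f ≠ 0 ∧ ∃ (m : ℕ) (jv : Fin m → Fin q → R[X]) (α : Fin m → ℕ) (β : Fin m → R),
    0 < m ∧ (∀ i, jv i ∈ Fs) ∧ (∀ i, jv i ≠ 0) ∧ Function.Injective jv ∧ (∀ i, β i ≠ 0) ∧
    (∀ i, vlm f = (vlm (jv i)).map fun mm => toLex (α i + (ofLex mm).1, (ofLex mm).2)) ∧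
    vlt f = ∑ i, (C (β i) * X ^ α i) • vlt (jv i) ∧
    h = f - ∑ i, (C (β i) * X ^ α i) • jv i

/-- Minimal Gröbner basis: a Gröbner basis each of whose elements is irreducible
modulo the others. -/
def IsMinimalGroebner {R : Type*} [CommRing R] {q : ℕ} (M : Submodule R[X] (Fin q → R[X]))
    (G : Finset (Fin q → R[X])) : Prop :=
  IsGroebner M G ∧ ∀ g ∈ G, ∀ h, ¬ ReducesOneStep (G.erase g) g h

/-! A module of rank `q` contains a nonzero multiple of every unit vector `e_j`, so a Gröbner basis
with `q` elements has exactly one element with each leading position `j`, and that element has the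
least degree among the elements of `M` with leading position `j`. Thus `δ` is the sum of these least
degrees over all positions. A family of `q` elements of `M` with distinct leading positions has
degree sum at least `δ`, with equality exactly when each member has least degree at its position,
which is what being a Gröbner basis means here; distinct leading positions also leave no element
reducible by the others. -/

section LeadingMonomial

variable {R : Type*} [CommRing R] {q : ℕ} {f : Fin q → R[X]}

lemma mem_vsupp {m : Lex (ℕ × Fin q)} : m ∈ vsupp f ↔ (f (ofLex m).2).coeff (ofLex m).1 ≠ 0 := by
  simp only [vsupp, Finset.mem_biUnion, Finset.mem_univ, Finset.mem_image, true_and,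
    mem_support_iff]
  exact ⟨fun ⟨_, _, ha, hm⟩ => hm ▸ ha, fun h => ⟨_, _, h, rfl⟩⟩

lemma vlm_eq_bot_iff : vlm f = ⊥ ↔ f = 0 := by
  rw [vlm, Finset.max_eq_bot, Finset.eq_empty_iff_forall_notMem]
  refine ⟨fun h => funext fun i => Polynomial.ext fun a => ?_, ?_⟩
  · simpa [mem_vsupp] using h (toLex (a, i))
  · rintro rfl m
    simp [mem_vsupp]

lemma vlpos_eq_bot_iff : vlpos f = ⊥ ↔ f = 0 := by
  rw [vlpos, WithBot.map_eq_bot_iff, vlm_eq_bot_iff]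

lemma ne_zero_of_vlpos_eq {j : Fin q} (h : vlpos f = j) : f ≠ 0 :=
  fun hf => WithBot.coe_ne_bot (h.symm.trans (vlpos_eq_bot_iff.2 hf))

lemma exists_vlm_eq (hf : f ≠ 0) :
    ∃ d p, vlm f = (toLex (d, p) : Lex (ℕ × Fin q)) ∧ (f p).coeff d ≠ 0 := by
  obtain ⟨m, hm⟩ := WithBot.ne_bot_iff_exists.1 (mt vlm_eq_bot_iff.1 hf)
  exact ⟨(ofLex m).1, (ofLex m).2, hm.symm, mem_vsupp.1 (Finset.mem_of_max hm.symm)⟩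

section
variable {d : ℕ} {p : Fin q} (h : vlm f = (toLex (d, p) : Lex (ℕ × Fin q)))
include h

lemma vdeg_eq_of_vlm_eq : vdeg f = d := by
  rw [vdeg, h]; rfl

lemma vlpos_eq_of_vlm_eq : vlpos f = p := by
  rw [vlpos, h]; rfl

lemma vlc_eq_of_vlm_eq : vlc f = (f p).coeff d := by
  rw [vlc, h]; rfl

lemma vlt_eq_of_vlm_eq : vlt f = Pi.single p (C ((f p).coeff d) * X ^ d) := by
  rw [vlt, h]
  funext j
  by_cases hj : j = p <;> simp [hj]

end

lemma vlt_zero : vlt (0 : Fin q → R[X]) = 0 := by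
  rw [vlt, vlm_eq_bot_iff.2 rfl]; rfl

lemma vlpos_single {j : Fin q} {c : R[X]} (hc : c ≠ 0) : vlpos (Pi.single j c) = j := by
  obtain ⟨d, p, hlm, hcoeff⟩ := exists_vlm_eq (Pi.single_ne_zero_iff.2 hc)
  rw [vlpos_eq_of_vlm_eq hlm]
  by_contra hpj
  simp [Pi.single_eq_of_ne (fun h => hpj (congrArg _ h))] at hcoeff

end LeadingMonomial

def LmDvd {R : Type*} [CommRing R] {q : ℕ} (u f : Fin q → R[X]) : Prop :=
  u ≠ 0 ∧ vlpos u = vlpos f ∧ vdeg u ≤ vdeg f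

section LeadingTerms

variable {R : Type*} [CommRing R] {q : ℕ}

lemma LmDvd.ne_zero_right {u f : Fin q → R[X]} (h : LmDvd u f) : f ≠ 0 := by
  rintro rfl
  exact h.1 (vlpos_eq_bot_iff.1 (h.2.1.trans (vlpos_eq_bot_iff.2 rfl)))

/-- Quantifying over all degrees `d` makes the claim stable under multiplication by
polynomials, so that it passes through the induction on the span. -/
lemma exists_vlpos_eq_vdeg_le_of_mem_span_vlt {G : Set (Fin q → R[X])} {v : Fin q → R[X]}
    (hv : v ∈ Submodule.span R[X] (vlt '' G)) (p : Fin q) :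
    ∀ d, (v p).coeff d ≠ 0 → ∃ u ∈ G, u ≠ 0 ∧ vlpos u = p ∧ vdeg u ≤ d := by
  induction hv using Submodule.span_induction with
  | mem w hw =>
    obtain ⟨u, hu, rfl⟩ := hw
    intro d hd
    have hu0 : u ≠ 0 := by rintro rfl; simp [vlt_zero] at hd
    obtain ⟨d', p', hlm, -⟩ := exists_vlm_eq hu0
    rw [vlt_eq_of_vlm_eq hlm] at hd
    obtain rfl : p = p' := by
      by_contra hp
      simp [Pi.single_eq_of_ne hp] at hd
    simp only [Pi.single_eq_same, coeff_C_mul_X_pow, ne_eq, ite_eq_right_iff, not_forall] at hd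
    exact ⟨u, hu, hu0, vlpos_eq_of_vlm_eq hlm, (vdeg_eq_of_vlm_eq hlm).trans_le hd.1.ge⟩
  | zero => simp
  | add w w' _ _ ih ih' =>
    intro d hd
    by_cases hw : (w p).coeff d = 0
    · exact ih' d (by simpa [hw] using hd)
    · exact ih d hw
  | smul c w _ ih =>
    intro d hd
    rw [Pi.smul_apply, smul_eq_mul, coeff_mul] at hd
    obtain ⟨⟨i, j⟩, hij, hne⟩ := Finset.exists_ne_zero_of_sum_ne_zero hd
    obtain ⟨u, hu, hu0, hpos, hdeg⟩ := ih j (right_ne_zero_of_mul hne)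
    rw [Finset.HasAntidiagonal.mem_antidiagonal] at hij
    exact ⟨u, hu, hu0, hpos, by omega⟩

lemma ReducesOneStep.exists_lmDvd {Fs : Finset (Fin q → R[X])} {f h : Fin q → R[X]}
    (hred : ReducesOneStep Fs f h) : ∃ u ∈ Fs, LmDvd u f := by
  obtain ⟨hf, m, jv, α, -, hm, hFs, hz, -, -, hvlm, -, -⟩ := hred
  let i : Fin m := ⟨0, hm⟩
  obtain ⟨d, p, hlm, -⟩ := exists_vlm_eq hf
  obtain ⟨d', p', hlm', -⟩ := exists_vlm_eq (hz i)
  have hi := hvlm i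
  rw [hlm, hlm', WithBot.map_coe, WithBot.coe_inj, toLex_inj, ofLex_toLex, Prod.mk.injEq] at hi
  obtain ⟨rfl, rfl⟩ := hi
  refine ⟨jv i, hFs i, hz i, ?_, ?_⟩
  · rw [vlpos_eq_of_vlm_eq hlm', vlpos_eq_of_vlm_eq hlm]
  · rw [vdeg_eq_of_vlm_eq hlm', vdeg_eq_of_vlm_eq hlm]
    exact Nat.le_add_left _ _

end LeadingTerms

section Groebner

variable {F : Type*} [Field F] {q : ℕ}

lemma LmDvd.vlt_eq_smul {u f : Fin q → F[X]} (h : LmDvd u f) :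
    vlt f = (C (vlc f / vlc u) * X ^ (vdeg f - vdeg u)) • vlt u := by
  obtain ⟨d, p, hlm, -⟩ := exists_vlm_eq h.ne_zero_right
  obtain ⟨hu, hpos, hdeg⟩ := h
  obtain ⟨d', p', hlm', hc'⟩ := exists_vlm_eq hu
  rw [vlpos_eq_of_vlm_eq hlm', vlpos_eq_of_vlm_eq hlm, WithBot.coe_inj] at hpos
  subst hpos
  rw [vdeg_eq_of_vlm_eq hlm', vdeg_eq_of_vlm_eq hlm] at hdeg
  rw [vlt_eq_of_vlm_eq hlm, vlt_eq_of_vlm_eq hlm', vdeg_eq_of_vlm_eq hlm, vdeg_eq_of_vlm_eq hlm',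
    vlc_eq_of_vlm_eq hlm, vlc_eq_of_vlm_eq hlm', ← Pi.single_smul', smul_eq_mul, mul_mul_mul_comm,
    ← C_mul, div_mul_cancel₀ _ hc', ← pow_add, Nat.sub_add_cancel hdeg]

lemma isGroebner_iff_forall_exists_lmDvd {M : Submodule F[X] (Fin q → F[X])}
    {G : Finset (Fin q → F[X])} (hGM : (G : Set (Fin q → F[X])) ⊆ M) :
    IsGroebner M G ↔ ∀ h ∈ M, h ≠ 0 → ∃ u ∈ G, LmDvd u h := by
  refine ⟨fun hG h hM hh => ?_,
    fun hcov => ⟨hGM, le_antisymm (Submodule.span_mono (Set.image_mono hGM)) ?_⟩⟩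
  · obtain ⟨d, p, hlm, hc⟩ := exists_vlm_eq hh
    have hv : vlt h ∈ ltSubmodule (G : Set (Fin q → F[X])) :=
      hG.2 ▸ Submodule.subset_span ⟨h, hM, rfl⟩
    obtain ⟨u, hu, hu0, hpos, hdeg⟩ :=
      exists_vlpos_eq_vdeg_le_of_mem_span_vlt hv p d (by simpa [vlt_eq_of_vlm_eq hlm] using hc)
    exact ⟨u, hu, hu0, hpos.trans (vlpos_eq_of_vlm_eq hlm).symm,
      hdeg.trans_eq (vdeg_eq_of_vlm_eq hlm).symm⟩
  · rw [ltSubmodule, Submodule.span_le]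
    rintro - ⟨h, hM, rfl⟩
    rcases eq_or_ne h 0 with rfl | hh
    · rw [vlt_zero]
      exact zero_mem _
    obtain ⟨u, hu, hdvd⟩ := hcov h hM hh
    rw [hdvd.vlt_eq_smul]
    exact Submodule.smul_mem _ _ (Submodule.subset_span ⟨u, hu, rfl⟩)

end Groebner

theorem Submodule.exists_smul_mem_of_rank_eq {R M : Type*} [CommRing R] [IsDomain R]
    [AddCommGroup M] [Module R M] {N : Submodule R M} (hN : Module.rank R N = Module.rank R M)
    (hfin : Module.rank R M < Cardinal.aleph0) (m : M) : ∃ r : R, r ≠ 0 ∧ r • m ∈ N := by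
  have hquot : Module.rank R (M ⧸ N) = 0 :=
    Cardinal.eq_of_add_eq_add_right (by rw [rank_quotient_add_rank_of_isDomain, hN, zero_add])
      (hN ▸ hfin)
  obtain ⟨r, hr, hrm⟩ := rank_eq_zero_iff.1 hquot (Submodule.Quotient.mk m)
  exact ⟨r, hr, (Submodule.Quotient.mk_eq_zero N).1 (by rwa [← Submodule.Quotient.mk_smul] at hrm)⟩

section Positions

variable {α : Type*} [Finite α] {f : α → WithBot α}

lemma exists_equiv_of_forall_exists_eq_coe (h : ∀ b : α, ∃ a, f a = b) :
    ∃ e : α ≃ α, ∀ a, f a = e a := by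
  choose τ hτ using h
  have hbij : Function.Bijective τ := Finite.injective_iff_bijective.1 fun a b hab =>
    WithBot.coe_injective (by rw [← hτ, ← hτ, hab])
  refine ⟨(Equiv.ofBijective τ hbij).symm, fun a => ?_⟩
  conv_lhs => rw [← (Equiv.ofBijective τ hbij).apply_symm_apply a]
  exact hτ _

lemma forall_exists_eq_coe_of_injective (hf : Function.Injective f) (hbot : ∀ a, f a ≠ ⊥)
    (b : α) : ∃ a, f a = b := by
  have hsurj : Function.Surjective fun a => (f a).unbot (hbot a) :=
    Finite.injective_iff_surjective.1 fun a a' h => hf (by simpa using congrArg WithBot.some h)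
  obtain ⟨a, ha⟩ := hsurj b
  exact ⟨a, by rw [← ha, WithBot.coe_unbot]⟩

end Positions

def IsDegreeMinimal {R : Type*} [CommRing R] {q : ℕ} (M : Submodule R[X] (Fin q → R[X]))
    (f : Fin q → R[X]) : Prop :=
  ∀ h ∈ M, h ≠ 0 → vlpos h = vlpos f → vdeg f ≤ vdeg h

section FullRank

variable {F : Type*} [Field F] {q : ℕ} {M : Submodule F[X] (Fin q → F[X])}

lemma IsGroebner.exists_vlpos_eq (hrank : Module.rank F[X] M = q) {G : Finset (Fin q → F[X])}
    (hG : IsGroebner M G) (j : Fin q) : ∃ u ∈ G, vlpos u = j := by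
  obtain ⟨c, hc, hcM⟩ := M.exists_smul_mem_of_rank_eq (by rw [hrank, rank_fun', Fintype.card_fin])
    (by simp) (Pi.single j 1)
  rw [← Pi.single_smul', smul_eq_mul, mul_one] at hcM
  obtain ⟨u, hu, hdvd⟩ := (isGroebner_iff_forall_exists_lmDvd hG.1).1 hG _ hcM
    (Pi.single_ne_zero_iff.2 hc)
  exact ⟨u, hu, hdvd.2.1.trans (vlpos_single hc)⟩

lemma isGroebner_image_iff (hrank : Module.rank F[X] M = q) {g : Fin q → Fin q → F[X]}
    (hgM : ∀ i, g i ∈ M) :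
    IsGroebner M (Finset.image g Finset.univ) ↔
      (∀ j : Fin q, ∃ i, vlpos (g i) = j) ∧ ∀ i, IsDegreeMinimal M (g i) := by
  have hGM : (Finset.image g Finset.univ : Set (Fin q → F[X])) ⊆ M := by
    simpa [Set.range_subset_iff] using hgM
  rw [isGroebner_iff_forall_exists_lmDvd hGM]
  refine ⟨fun hcov => ?_, fun ⟨hpos, hmin⟩ h hM hh => ?_⟩
  · have hpos (j : Fin q) : ∃ i, vlpos (g i) = j := by
      obtain ⟨_, hu, hj⟩ := IsGroebner.exists_vlpos_eq hrank
        ((isGroebner_iff_forall_exists_lmDvd hGM).2 hcov) j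
      obtain ⟨i, -, rfl⟩ := Finset.mem_image.1 hu
      exact ⟨i, hj⟩
    obtain ⟨e, he⟩ := exists_equiv_of_forall_exists_eq_coe hpos
    refine ⟨hpos, fun i h hM hh hhi => ?_⟩
    obtain ⟨_, hu, hdvd⟩ := hcov h hM hh
    obtain ⟨k, -, rfl⟩ := Finset.mem_image.1 hu
    obtain rfl : k = i := e.injective (WithBot.coe_injective (by rw [← he, ← he, hdvd.2.1, hhi]))
    exact hdvd.2.2
  · obtain ⟨j, hj⟩ := WithBot.ne_bot_iff_exists.1 (mt vlpos_eq_bot_iff.1 hh)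
    obtain ⟨i, hi⟩ := hpos j
    have hih : vlpos (g i) = vlpos h := hi.trans hj
    exact ⟨g i, Finset.mem_image_of_mem g (Finset.mem_univ i), ne_zero_of_vlpos_eq hi, hih,
      hmin i h hM hh hih.symm⟩

/-- Matched by leading position, each degree of `b` is at most the corresponding degree of `g`. -/
lemma sum_vdeg_eq_iff_forall_isDegreeMinimal {b g : Fin q → Fin q → F[X]}
    (hbpos : ∀ j : Fin q, ∃ k, vlpos (b k) = j) (hbmin : ∀ k, IsDegreeMinimal M (b k))
    (hbM : ∀ k, b k ∈ M) (hgpos : ∀ j : Fin q, ∃ i, vlpos (g i) = j) (hgM : ∀ i, g i ∈ M) :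
    ∑ i, vdeg (g i) = ∑ k, vdeg (b k) ↔ ∀ i, IsDegreeMinimal M (g i) := by
  obtain ⟨eb, heb⟩ := exists_equiv_of_forall_exists_eq_coe hbpos
  obtain ⟨eg, heg⟩ := exists_equiv_of_forall_exists_eq_coe hgpos
  set σ := eg.trans eb.symm
  have hσ (i : Fin q) : vlpos (b (σ i)) = vlpos (g i) := by simp [σ, heb, heg]
  have hle (i : Fin q) : vdeg (b (σ i)) ≤ vdeg (g i) :=
    hbmin (σ i) (g i) (hgM i) (ne_zero_of_vlpos_eq (heg i)) (hσ i).symm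
  rw [← σ.sum_comp (fun k => vdeg (b k)), eq_comm, Finset.sum_eq_sum_iff_of_le fun i _ => hle i]
  simp only [Finset.mem_univ, forall_const]
  refine forall_congr' fun i => ⟨fun heq h hM hh hhi => ?_, fun hmin => (hle i).antisymm ?_⟩
  · exact heq.symm ▸ hbmin _ h hM hh (hhi.trans (hσ i).symm)
  · exact hmin _ (hbM _) (ne_zero_of_vlpos_eq (heb _)) (hσ i)

end FullRank

theorem isMinimalGroebner_iff_general {F : Type*} [Field F] {q : ℕ}
    (M : Submodule (Polynomial F) (Fin q → Polynomial F))
    (hrank : Module.rank (Polynomial F) ↥M = q) (δ : ℕ)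
    (gb : Fin q → Fin q → Polynomial F)
    (hgb : IsMinimalGroebner M (Finset.image gb Finset.univ))
    (hδ : ∑ i, vdeg (gb i) = δ)
    (g : Fin q → Fin q → Polynomial F) (hgM : ∀ i, g i ∈ M) (hgz : ∀ i, g i ≠ 0) :
    IsMinimalGroebner M (Finset.image g Finset.univ) ↔
      (∑ i, vdeg (g i) = δ ∧ ∀ i j, i ≠ j → vlpos (g i) ≠ vlpos (g j)) := by
  have hgbM (k : Fin q) : gb k ∈ M := hgb.1.1 (Finset.mem_image_of_mem gb (Finset.mem_univ k))
  obtain ⟨hbpos, hbmin⟩ := (isGroebner_image_iff hrank hgbM).1 hgb.1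
  rw [← hδ]
  constructor
  · intro hG
    obtain ⟨hpos, hmin⟩ := (isGroebner_image_iff hrank hgM).1 hG.1
    obtain ⟨e, he⟩ := exists_equiv_of_forall_exists_eq_coe hpos
    refine ⟨(sum_vdeg_eq_iff_forall_isDegreeMinimal hbpos hbmin hgbM hpos hgM).2 hmin,
      fun i j hij => ?_⟩
    rw [he, he]
    exact_mod_cast e.injective.ne hij
  · rintro ⟨hsum, hdist⟩
    have hpos := forall_exists_eq_coe_of_injective (f := fun i => vlpos (g i))
      (fun i j => not_imp_not.1 (hdist i j)) (fun i => mt vlpos_eq_bot_iff.1 (hgz i))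
    refine ⟨(isGroebner_image_iff hrank hgM).2
      ⟨hpos, (sum_vdeg_eq_iff_forall_isDegreeMinimal hbpos hbmin hgbM hpos hgM).1 hsum⟩, ?_⟩
    rintro _ hgi h hred
    obtain ⟨i, -, rfl⟩ := Finset.mem_image.1 hgi
    obtain ⟨u, hu, hdvd⟩ := hred.exists_lmDvd
    obtain ⟨hne, huG⟩ := Finset.mem_erase.1 hu
    obtain ⟨k, -, rfl⟩ := Finset.mem_image.1 huG
    exact hne (congrArg g (by_contra fun hki => hdist k i hki hdvd.2.1))

/-- Characterization of minimal Gröbner bases of a full-rank module: let `M ⊆ F[x]^q` have rank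
`q` and degree `δ` (the degree sum of a minimal Gröbner basis), and `g_1,…,g_q ∈ M` nonzero.
Then `{g_1,…,g_q}` is a minimal Gröbner basis of `M` iff the degrees of the `g_i` sum to `δ`
and their leading positions are pairwise distinct. -/
theorem isMinimalGroebner_iff {F : Type*} [Field F] {q : ℕ}
    (M : Submodule (Polynomial F) (Fin q → Polynomial F))
    (hrank : Module.rank (Polynomial F) ↥M = q) (δ : ℕ)
    (gb : Fin q → Fin q → Polynomial F) (hgbinj : Function.Injective gb)
    (hgb : IsMinimalGroebner M (Finset.image gb Finset.univ))
    (hδ : ∑ i, vdeg (gb i) = δ)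
    (g : Fin q → Fin q → Polynomial F) (hgM : ∀ i, g i ∈ M) (hgz : ∀ i, g i ≠ 0) :
    IsMinimalGroebner M (Finset.image g Finset.univ) ↔
      (∑ i, vdeg (g i) = δ ∧ ∀ i j, i ≠ j → vlpos (g i) ≠ vlpos (g j)) :=
  isMinimalGroebner_iff_general M hrank δ gb hgb hδ g hgM hgz
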